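/- The polynomial identity: D(x, μ) = (b'−b)(1+b'−b)μ⁶ · [4d(3(b+b')²−7b−5b'+2)x + 4(b+b')((b+b')²(b−b')−2(b+b')(b−2b')−(b+5b')+2)μ² + d²(−(b+b')³(b−b')−2(b+b')(b²+3bb'+4b'²)+19b²+34bb'+19b'²−24b−16b'+4)] vanishes identically in x and μ if and only if b' = b, or b' = b−1, or (b,b') = (1,−1), or (b,b') = (0,1), or (b,b') = (2,0), assuming d ≠ 0. -/
import Mathlib


/-- The polynomial `D(x, μ)` of equation (3.16). -/
noncomputable def suD (b b' d x μ : ℂ) : ℂ :=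
  (b' - b) * (1 + b' - b) * μ^6 *
    (4*d*(3*(b + b')^2 - 7*b - 5*b' + 2) * x
      + 4*(b + b')*((b + b')^2*(b - b') - 2*(b + b')*(b - 2*b') - (b + 5*b') + 2) * μ^2
      + d^2*(-(b + b')^3*(b - b') - 2*(b + b')*(b^2 + 3*b*b' + 4*b'^2)
          + 19*b^2 + 34*b*b' + 19*b'^2 - 24*b - 16*b' + 4))

/-- For `d ≠ 0`, `D(x,μ)` vanishes identically in `x` and `μ` iff
`b' = b`, or `b' = b − 1`, or `(b,b') = (1,−1)`, or `(b,b') = (0,1)`, or `(b,b') = (2,0)`. -/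
theorem suD_vanishes_iff (b b' d : ℂ) (hd : d ≠ 0) :
    (∀ x μ : ℂ, suD b b' d x μ = 0) ↔
      (b' = b ∨ b' = b - 1 ∨ (b = 1 ∧ b' = -1) ∨ (b = 0 ∧ b' = 1) ∨ (b = 2 ∧ b' = 0)) := by
  constructor
  · intro h
    by_cases hbb : b' = b
    · exact Or.inl hbb
    by_cases h1 : b' = b - 1
    · exact Or.inr (Or.inl h1)
    have hk1 : b' - b ≠ 0 := sub_ne_zero.mpr hbb
    have hk2 : 1 + b' - b ≠ 0 := by
      intro hc; exact h1 (by linear_combination hc)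
    have e0 := h 0 1
    have e1 := h 1 1
    have e2 := h 0 2
    simp only [suD] at e0 e1 e2
    have hA : 3*(b + b')^2 - 7*b - 5*b' + 2 = 0 := by
      have key : ((b' - b) * (1 + b' - b) * (4*d)) *
          (3*(b + b')^2 - 7*b - 5*b' + 2) = 0 := by linear_combination e1 - e0
      exact (mul_eq_zero.mp key).resolve_left
        (mul_ne_zero (mul_ne_zero hk1 hk2) (mul_ne_zero (by norm_num) hd))
    have hB : (b + b') * ((b + b')^2*(b - b') - 2*(b + b')*(b - 2*b')
        - (b + 5*b') + 2) = 0 := by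
      have key : ((b' - b) * (1 + b' - b) * 768) *
          ((b + b') * ((b + b')^2*(b - b') - 2*(b + b')*(b - 2*b')
            - (b + 5*b') + 2)) = 0 := by linear_combination e2 - 64*e0
      exact (mul_eq_zero.mp key).resolve_left
        (mul_ne_zero (mul_ne_zero hk1 hk2) (by norm_num))
    have hS : (b + b') * ((b + b') - 1)^3 * ((b + b') - 2) = 0 := by
      linear_combination hB/3 + ((b + b') * ((b + b')^2 - 3*(b + b') + 2) / 3) * hA
    rcases mul_eq_zero.mp hS with hS1 | hs2
    · rcases mul_eq_zero.mp hS1 with hs0 | hs1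
      · -- b + b' = 0
        have hb' : b' = -b := by linear_combination hs0
        subst hb'
        refine Or.inr (Or.inr (Or.inl ⟨?_, ?_⟩))
        · linear_combination -hA/2
        · linear_combination hA/2
      · -- b + b' = 1
        have hs1' : (b + b') - 1 = 0 := by
          have := pow_eq_zero_iff (n := 3) (by norm_num) |>.mp hs1
          exact this
        have hb' : b' = 1 - b := by linear_combination hs1'
        subst hb'
        refine Or.inr (Or.inr (Or.inr (Or.inl ⟨?_, ?_⟩)))
        · linear_combination -hA/2
        · linear_combination hA/2
    · -- b + b' = 2
      have hb' : b' = 2 - b := by linear_combination hs2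
      subst hb'
      refine Or.inr (Or.inr (Or.inr (Or.inr ⟨?_, ?_⟩)))
      · linear_combination -hA/2
      · linear_combination hA/2
  · intro h x μ
    rcases h with h | h | ⟨h1, h2⟩ | ⟨h1, h2⟩ | ⟨h1, h2⟩ <;>
      (try subst h) <;> (try (subst h1; subst h2)) <;> simp only [suD] <;> ring
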